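/- Let γ ∈ SL(2,ℤ), N ≥ 1, and w ∈ Equiv.Perm (Fin N). Let L be the ℤ-linear endomorphism of (Fin N → (Fin 2 → ℤ)) given by (L v) i = v i - γ ⬝ v (w⁻¹ i) (the matrix Id_{2N} - w ⊗ γ). Then there is a ℤ-module isomorphism between the cokernel (Fin N → (Fin 2 → ℤ)) ⧸ range(L) and the direct sum, over the orbits o of the cyclic group ⟨w⟩ acting on Fin N, of coker(1 - γ^{|o|}), where |o| denotes the cardinality of the orbit o; consequently the torsion submodules of the two sides are also isomorphic. -/

import Mathlib

open DirectSum

abbrev cokerMat (M : Matrix (Fin 2) (Fin 2) ℤ) :=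
  (Fin 2 → ℤ) ⧸ LinearMap.range (Matrix.toLin' M)

/-!
In the cokernel of `1 - w ⊗ g` one has `[δᵢ u] = [δ_{w i} (g u)]`, so every class is carried by
the chosen representatives `r` of the orbits, and going once around an orbit of length `k` gives
`[δ_r u] = [δ_r (gᵏ u)]`. Hence `[u] ↦ [δ_r u]` is a well-defined surjection
`⨁ₒ coker (1 - gᵏ) → coker (1 - w ⊗ g)`. It is injective because the telescoping sums
`v ↦ ∑_{j<k} gʲ (v (w⁻ʲ r))` carry the image of `1 - w ⊗ g` into that of `1 - gᵏ`, and so induce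
a left inverse.
-/

open MulAction Function Subgroup

namespace Equiv.Perm

variable {ι : Type*} (w : Equiv.Perm ι)

local notation "Q" => orbitRel.Quotient (zpowers w) ι

theorem card_orbit_eq_minimalPeriod_out (o : Q) : Nat.card o.orbit = minimalPeriod w o.out := by
  rw [orbitRel.Quotient.orbit_eq_orbit_out o Quotient.out_eq',
    Nat.card_congr (orbitZPowersEquiv w o.out), Nat.card_zmod]
  rfl

theorem mk_apply_of_mem_zpowers {g : Perm ι} (hg : g ∈ zpowers w) (i : ι) : (⟦g i⟧ : Q) = ⟦i⟧ :=
  orbitRel.Quotient.quotient_smul_eq (g := (⟨g, hg⟩ : zpowers w))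

theorem eq_and_eq_zero_of_inv_pow_apply_out {o o' : Q} {j : ℕ} (hj : j < Nat.card o.orbit)
    (h : (w⁻¹ ^ j) o.out = o'.out) : o' = o ∧ j = 0 := by
  have ho : o' = o := by
    rw [← Quotient.out_eq o', ← h, mk_apply_of_mem_zpowers w (pow_mem (inv_mem (mem_zpowers w)) j),
      Quotient.out_eq]
  subst ho
  refine ⟨rfl, by_contra fun hj0 => ?_⟩
  rw [card_orbit_eq_minimalPeriod_out] at hj
  refine not_isPeriodicPt_of_pos_of_lt_minimalPeriod hj0 hj ?_
  rw [inv_pow, inv_eq_iff_eq] at h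
  rw [IsPeriodicPt, IsFixedPt, iterate_eq_pow, ← h]

theorem pow_card_orbit_apply_out (o : Q) : (w ^ Nat.card o.orbit) o.out = o.out := by
  rw [card_orbit_eq_minimalPeriod_out, ← iterate_eq_pow]
  exact iterate_minimalPeriod

variable [Finite ι]

theorem card_orbit_pos (o : Q) : 0 < Nat.card o.orbit := by
  rw [card_orbit_eq_minimalPeriod_out]
  exact Nat.pos_of_ne_zero (MulAction.minimalPeriod_pos w o.out).out

theorem exists_pow_apply_eq_out_mk (i : ι) : ∃ m : ℕ, (w ^ m) i = (⟦i⟧ : Q).out := by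
  obtain ⟨⟨_, n, rfl⟩, h⟩ := Quotient.mk_out (s := orbitRel (zpowers w) ι) i
  exact SameCycle.exists_nat_pow_eq ⟨n, h⟩

end Equiv.Perm

theorem LinearEquiv.map_torsion {R A B : Type*} [CommSemiring R] [AddCommMonoid A]
    [AddCommMonoid B] [Module R A] [Module R B] (e : A ≃ₗ[R] B) :
    (Submodule.torsion R A).map (e : A →ₗ[R] B) = Submodule.torsion R B := by
  ext y
  simp only [Submodule.mem_map, Submodule.mem_torsion_iff]
  constructor
  · rintro ⟨x, ⟨a, ha⟩, rfl⟩
    exact ⟨a, by simpa [Submonoid.smul_def] using congrArg e ha⟩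
  · rintro ⟨a, ha⟩
    exact ⟨e.symm y, ⟨a, by simpa [Submonoid.smul_def] using congrArg e.symm ha⟩,
      e.apply_symm_apply y⟩

section PermTensor

open Equiv

variable {R M ι : Type*} [Ring R] [AddCommGroup M] [Module R M] (w : Perm ι) (g : Module.End R M)

/-- The Kronecker product `w ⊗ g`, acting on `ι → M`. -/
def permTensor : Module.End R (ι → M) :=
  LinearMap.pi fun i => g ∘ₗ LinearMap.proj (w⁻¹ i)

@[simp]
theorem permTensor_apply (v : ι → M) (i : ι) : permTensor w g v i = g (v (w⁻¹ i)) := rfl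

theorem permTensor_single [DecidableEq ι] (i : ι) (u : M) :
    permTensor w g (Pi.single i u) = Pi.single (w i) (g u) := by
  ext j
  rcases eq_or_ne j (w i) with rfl | h
  · simp
  · have hj : w.symm j ≠ i := fun hc => h (by simp [← hc])
    simp [Pi.single_eq_of_ne h, Pi.single_eq_of_ne hj]

local notation "Q" => MulAction.orbitRel.Quotient (Subgroup.zpowers w) ι

theorem mk_single_eq_mk_single_pow [DecidableEq ι] (i : ι) (u : M) (m : ℕ) :
    (Submodule.Quotient.mk (Pi.single i u) : (ι → M) ⧸ LinearMap.range (1 - permTensor w g)) =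
      Submodule.Quotient.mk (Pi.single ((w ^ m) i) ((g ^ m) u)) := by
  induction m with
  | zero => simp
  | succ m ih =>
    rw [ih, Submodule.Quotient.eq]
    refine ⟨Pi.single ((w ^ m) i) ((g ^ m) u), ?_⟩
    rw [LinearMap.sub_apply, permTensor_single, pow_succ', pow_succ']
    rfl

noncomputable def orbitSum (o : Q) : (ι → M) →ₗ[R] M :=
  ∑ j ∈ Finset.range (Nat.card o.orbit), (g ^ j) ∘ₗ LinearMap.proj ((w⁻¹ ^ j) o.out)

theorem orbitSum_apply (o : Q) (v : ι → M) :
    orbitSum w g o v = ∑ j ∈ Finset.range (Nat.card o.orbit), (g ^ j) (v ((w⁻¹ ^ j) o.out)) := by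
  simp [orbitSum]

theorem orbitSum_one_sub_permTensor (o : Q) (v : ι → M) :
    orbitSum w g o ((1 - permTensor w g) v) = (1 - g ^ Nat.card o.orbit) (v o.out) := by
  set f : ℕ → M := fun j => (g ^ j) (v ((w⁻¹ ^ j) o.out))
  have hterm : ∀ j, (g ^ j) (((1 - permTensor w g) v) ((w⁻¹ ^ j) o.out)) = f j - f (j + 1) := by
    intro j
    rw [LinearMap.sub_apply, Module.End.one_apply, Pi.sub_apply, permTensor_apply, map_sub]
    simp only [f, pow_succ g, pow_succ' w⁻¹, Module.End.mul_apply, Perm.mul_apply]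
  have hperiod : (w⁻¹ ^ Nat.card o.orbit) o.out = o.out := by
    rw [inv_pow, Perm.inv_eq_iff_eq, w.pow_card_orbit_apply_out]
  rw [orbitSum_apply, Finset.sum_congr rfl fun j _ => hterm j, Finset.sum_range_sub']
  simp only [f, pow_zero, hperiod, Module.End.one_apply, Perm.one_apply, LinearMap.sub_apply]

noncomputable def cokerToPi :
    (ι → M) ⧸ LinearMap.range (1 - permTensor w g) →ₗ[R]
      ∀ o : Q, M ⧸ LinearMap.range (1 - g ^ Nat.card o.orbit) :=
  Submodule.liftQ _ (LinearMap.pi fun o => Submodule.mkQ _ ∘ₗ orbitSum w g o) <| by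
    rintro _ ⟨v, rfl⟩
    ext o
    simp only [LinearMap.pi_apply, LinearMap.comp_apply, Submodule.mkQ_apply,
      orbitSum_one_sub_permTensor, Pi.zero_apply, Submodule.Quotient.mk_eq_zero]
    exact LinearMap.mem_range_self _ _

variable [DecidableEq ι] [DecidableEq (MulAction.orbitRel.Quotient (Subgroup.zpowers w) ι)]

noncomputable def directSumToCoker :
    (⨁ o : Q, M ⧸ LinearMap.range (1 - g ^ Nat.card o.orbit)) →ₗ[R]
      (ι → M) ⧸ LinearMap.range (1 - permTensor w g) :=
  toModule R Q _ fun o => Submodule.liftQ _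
    (Submodule.mkQ _ ∘ₗ LinearMap.single R (fun _ => M) o.out) <| by
      rintro _ ⟨u, rfl⟩
      rw [LinearMap.mem_ker, LinearMap.comp_apply, LinearMap.coe_single, Submodule.mkQ_apply,
        LinearMap.sub_apply, Module.End.one_apply, Pi.single_sub, Submodule.Quotient.mk_sub,
        sub_eq_zero, mk_single_eq_mk_single_pow w g _ _ (Nat.card o.orbit),
        w.pow_card_orbit_apply_out]

theorem directSumToCoker_of (o : Q) (u : M) :
    directSumToCoker w g (of _ o (Submodule.Quotient.mk u)) =
      Submodule.Quotient.mk (Pi.single o.out u) :=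
  toModule_lof R o _

variable [Finite ι]

theorem orbitSum_single_out (o o' : Q) (u : M) :
    orbitSum w g o (Pi.single o'.out u) = (Pi.single o' u : Q → M) o := by
  rw [orbitSum_apply, Finset.sum_eq_single 0]
  · simp only [pow_zero, Perm.one_apply, Module.End.one_apply, Pi.single_apply, Quotient.out_inj]
  · intro j hj hj0
    have hne : (w⁻¹ ^ j) o.out ≠ o'.out := fun h =>
      hj0 (w.eq_and_eq_zero_of_inv_pow_apply_out (Finset.mem_range.1 hj) h).2
    rw [Pi.single_eq_of_ne hne, map_zero]
  · exact fun h => absurd (Finset.mem_range.2 (w.card_orbit_pos o)) h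

theorem cokerToPi_directSumToCoker
    (x : ⨁ o : Q, M ⧸ LinearMap.range (1 - g ^ Nat.card o.orbit)) :
    cokerToPi w g (directSumToCoker w g x) = ⇑x := by
  induction x using DirectSum.induction_on with
  | zero => rw [map_zero, map_zero, DFinsupp.coe_zero]
  | of o c =>
    obtain ⟨u, rfl⟩ := Submodule.Quotient.mk_surjective _ c
    funext o'
    rw [directSumToCoker_of]
    change Submodule.Quotient.mk (orbitSum w g o' (Pi.single o.out u)) = _
    rw [orbitSum_single_out]
    rcases eq_or_ne o o' with rfl | h
    · rw [Pi.single_eq_same, of_eq_same]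
    · rw [Pi.single_eq_of_ne h.symm, of_eq_of_ne _ _ _ h.symm, Submodule.Quotient.mk_zero]
  | add x y hx hy => rw [map_add, map_add, hx, hy, DFinsupp.coe_add]

theorem directSumToCoker_injective :
    Injective (directSumToCoker w g) := by
  have h : cokerToPi w g ∘ directSumToCoker w g = (⇑) := funext (cokerToPi_directSumToCoker w g)
  exact Injective.of_comp (f := cokerToPi w g) (h ▸ DFunLike.coe_injective)

theorem directSumToCoker_surjective :
    Surjective (directSumToCoker w g) := by
  have := Fintype.ofFinite ι
  rw [← LinearMap.range_eq_top, eq_top_iff]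
  rintro _ -
  obtain ⟨v, rfl⟩ := Submodule.Quotient.mk_surjective _ ‹_›
  rw [← Finset.univ_sum_single v, ← Submodule.mkQ_apply, map_sum]
  refine Submodule.sum_mem _ fun i _ => ?_
  obtain ⟨m, hm⟩ := w.exists_pow_apply_eq_out_mk i
  refine ⟨of _ ⟦i⟧ (Submodule.Quotient.mk ((g ^ m) (v i))), ?_⟩
  rw [directSumToCoker_of, ← hm, Submodule.mkQ_apply, mk_single_eq_mk_single_pow w g i (v i) m]

noncomputable def cokerEquivDirectSum :
    ((ι → M) ⧸ LinearMap.range (1 - permTensor w g)) ≃ₗ[R]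
      ⨁ o : Q, M ⧸ LinearMap.range (1 - g ^ Nat.card o.orbit) :=
  (LinearEquiv.ofBijective (directSumToCoker w g)
    ⟨directSumToCoker_injective w g, directSumToCoker_surjective w g⟩).symm

end PermTensor

theorem stmt3_general (γ : Matrix.SpecialLinearGroup (Fin 2) ℤ) (N : ℕ)
    (w : Equiv.Perm (Fin N))
    (L : (Fin N → Fin 2 → ℤ) →ₗ[ℤ] (Fin N → Fin 2 → ℤ))
    (hL : ∀ (v : Fin N → Fin 2 → ℤ) (i : Fin N),
      L v i = v i - Matrix.mulVec (γ : Matrix (Fin 2) (Fin 2) ℤ) (v (w⁻¹ i))) :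
    Nonempty (((Fin N → Fin 2 → ℤ) ⧸ LinearMap.range L) ≃ₗ[ℤ]
        (⨁ o : MulAction.orbitRel.Quotient (Subgroup.zpowers w) (Fin N),
          cokerMat (1 - ((γ ^ (Nat.card o.orbit) : Matrix.SpecialLinearGroup (Fin 2) ℤ) :
            Matrix (Fin 2) (Fin 2) ℤ)))) ∧
    Nonempty ((Submodule.torsion ℤ ((Fin N → Fin 2 → ℤ) ⧸ LinearMap.range L)) ≃ₗ[ℤ]
        (Submodule.torsion ℤ
          (⨁ o : MulAction.orbitRel.Quotient (Subgroup.zpowers w) (Fin N),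
            cokerMat (1 - ((γ ^ (Nat.card o.orbit) : Matrix.SpecialLinearGroup (Fin 2) ℤ) :
              Matrix (Fin 2) (Fin 2) ℤ))))) := by
  classical
  have hL' : L = 1 - permTensor w (Matrix.toLin' (γ : Matrix (Fin 2) (Fin 2) ℤ)) :=
    LinearMap.ext fun v => funext fun i => by simp [hL]
  have hγ (k : ℕ) : 1 - Matrix.toLin' (γ : Matrix (Fin 2) (Fin 2) ℤ) ^ k =
      Matrix.toLin' (1 - ((γ ^ k : Matrix.SpecialLinearGroup (Fin 2) ℤ) :
        Matrix (Fin 2) (Fin 2) ℤ)) := by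
    rw [Matrix.SpecialLinearGroup.coe_pow, map_sub, Matrix.toLin'_one, Matrix.toLin'_pow,
      Module.End.one_eq_id]
  subst hL'
  let e := (cokerEquivDirectSum w (Matrix.toLin' (γ : Matrix (Fin 2) (Fin 2) ℤ))).trans
    (DFinsupp.mapRange.linearEquiv fun o =>
      Submodule.quotEquivOfEq _ _ (congrArg LinearMap.range (hγ _)))
  exact ⟨⟨e⟩, ⟨e.ofSubmodules _ _ e.map_torsion⟩⟩

/-- for `w ∈ S_N` and the endomorphism `L` of `Fin N → (Fin 2 → ℤ)` given by
`(L v) i = v i - γ ⬝ v (w⁻¹ i)` (the matrix `Id_{2N} - w ⊗ γ`), the cokernel of `L` is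
isomorphic as a `ℤ`-module to the direct sum over the orbits `o` of `⟨w⟩` on `Fin N`
of `coker(1 - γ^{|o|})`; consequently the torsion submodules are isomorphic. -/
theorem stmt3 (γ : Matrix.SpecialLinearGroup (Fin 2) ℤ) (N : ℕ) (hN : 1 ≤ N)
    (w : Equiv.Perm (Fin N))
    (L : (Fin N → Fin 2 → ℤ) →ₗ[ℤ] (Fin N → Fin 2 → ℤ))
    (hL : ∀ (v : Fin N → Fin 2 → ℤ) (i : Fin N),
      L v i = v i - Matrix.mulVec (γ : Matrix (Fin 2) (Fin 2) ℤ) (v (w⁻¹ i))) :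
    Nonempty (((Fin N → Fin 2 → ℤ) ⧸ LinearMap.range L) ≃ₗ[ℤ]
        (⨁ o : MulAction.orbitRel.Quotient (Subgroup.zpowers w) (Fin N),
          cokerMat (1 - ((γ ^ (Nat.card o.orbit) : Matrix.SpecialLinearGroup (Fin 2) ℤ) :
            Matrix (Fin 2) (Fin 2) ℤ)))) ∧
    Nonempty ((Submodule.torsion ℤ ((Fin N → Fin 2 → ℤ) ⧸ LinearMap.range L)) ≃ₗ[ℤ]
        (Submodule.torsion ℤ
          (⨁ o : MulAction.orbitRel.Quotient (Subgroup.zpowers w) (Fin N),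
            cokerMat (1 - ((γ ^ (Nat.card o.orbit) : Matrix.SpecialLinearGroup (Fin 2) ℤ) :
              Matrix (Fin 2) (Fin 2) ℤ))))) :=
  stmt3_general γ N w L hL
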